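/- arXiv:2604.18858 — 3 statements merged into one kernel-verified Lean document; each statement's English description precedes it below -/
import Mathlib

section
/- Let M : X → Y be a linear map between finite-dimensional real inner product spaces and K ⊆ X a closed convex cone. If Ker(M) ∩ K = {0}, then the image M(K) is closed. -/
open Metric

/-- `‖f ·‖` attains a positive minimum on the compact set of unit vectors of the cone, and the
cone is spanned by them with nonnegative scalars. -/
theorem LinearMap.exists_norm_le_mul_norm_of_isClosed_cone {E F : Type*} [NormedAddCommGroup E]
    [NormedSpace ℝ E] [FiniteDimensional ℝ E] [NormedAddCommGroup F] [NormedSpace ℝ F]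
    (f : E →ₗ[ℝ] F) {K : Set E} (hK : IsClosed K) (hcone : ∀ x ∈ K, ∀ t : ℝ, 0 ≤ t → t • x ∈ K)
    (hker : ∀ x ∈ K, f x = 0 → x = 0) :
    ∃ c : ℝ, ∀ x ∈ K, ‖x‖ ≤ c * ‖f x‖ := by
  have hcompact : IsCompact (K ∩ sphere 0 1) := (isCompact_sphere 0 1).inter_left hK
  have hpos : ∀ u ∈ K ∩ sphere 0 1, 0 < ‖f u‖ := by
    rintro u ⟨huK, hu⟩
    refine norm_pos_iff.mpr fun hfu => ?_
    simp [hker u huK hfu] at hu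
  obtain ⟨m, hm, hmin⟩ :=
    hcompact.exists_forall_le' f.continuous_of_finiteDimensional.norm.continuousOn hpos
  refine ⟨m⁻¹, fun x hx => ?_⟩
  rcases eq_or_ne x 0 with rfl | hx0
  · simp
  have hxpos : 0 < ‖x‖ := norm_pos_iff.mpr hx0
  have hunit : ‖x‖⁻¹ • x ∈ K ∩ sphere 0 1 :=
    ⟨hcone x hx _ (inv_nonneg.mpr hxpos.le), by simp [norm_smul, inv_mul_cancel₀ hxpos.ne']⟩
  have hbound : m ≤ ‖x‖⁻¹ * ‖f x‖ := by
    simpa [norm_smul, abs_of_pos hxpos] using hmin _ hunit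
  rw [le_inv_mul_iff₀ hxpos] at hbound
  rw [le_inv_mul_iff₀ hm, mul_comm]
  exact hbound

/-- Near a point of its closure, `f '' K` is contained in the image of a bounded, hence compact,
part of `K`. -/
theorem isClosed_image_of_norm_le_mul_norm {E F : Type*} [NormedAddCommGroup E] [ProperSpace E]
    [NormedAddCommGroup F] {f : E → F} (hf : Continuous f) {K : Set E} (hK : IsClosed K) {c : ℝ}
    (hc : ∀ x ∈ K, ‖x‖ ≤ c * ‖f x‖) :
    IsClosed (f '' K) := by
  refine closure_subset_iff_isClosed.mp fun y hy => ?_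
  set R := |c| * (‖y‖ + 1)
  have hlocal : ball y 1 ∩ f '' K ⊆ f '' (K ∩ closedBall 0 R) := by
    rintro _ ⟨hz, x, hx, rfl⟩
    refine ⟨x, ⟨hx, mem_closedBall_zero_iff.mpr ?_⟩, rfl⟩
    have hfx : ‖f x‖ ≤ ‖y‖ + 1 := by
      have := norm_le_norm_add_norm_sub' (f x) y
      rw [mem_ball, dist_eq_norm] at hz
      linarith
    calc ‖x‖ ≤ c * ‖f x‖ := hc x hx
      _ ≤ |c| * ‖f x‖ := by gcongr; exact le_abs_self c
      _ ≤ R := mul_le_mul_of_nonneg_left hfx (abs_nonneg c)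
  have hclosed : IsClosed (f '' (K ∩ closedBall 0 R)) :=
    (((isCompact_closedBall 0 R).inter_left hK).image hf).isClosed
  have hyR : y ∈ f '' (K ∩ closedBall 0 R) :=
    hclosed.closure_subset_iff.mpr hlocal
      (isOpen_ball.inter_closure ⟨mem_ball_self one_pos, hy⟩)
  exact Set.image_mono Set.inter_subset_left hyR

theorem stmt0_general {X Y : Type*} [NormedAddCommGroup X] [InnerProductSpace ℝ X]
    [FiniteDimensional ℝ X] [NormedAddCommGroup Y] [InnerProductSpace ℝ Y]
    (M : X →ₗ[ℝ] Y) (K : Set X)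
    (hKclosed : IsClosed K)
    (hKcone : ∀ x ∈ K, ∀ t : ℝ, 0 ≤ t → t • x ∈ K)
    (hker : (LinearMap.ker M : Set X) ∩ K = {0}) :
    IsClosed (M '' K) := by
  have hker' : ∀ x ∈ K, M x = 0 → x = 0 := fun x hx hMx =>
    (Set.ext_iff.mp hker x).mp ⟨hMx, hx⟩
  obtain ⟨c, hc⟩ := M.exists_norm_le_mul_norm_of_isClosed_cone hKclosed hKcone hker'
  exact isClosed_image_of_norm_le_mul_norm M.continuous_of_finiteDimensional hKclosed hc

theorem stmt0 {X Y : Type*} [NormedAddCommGroup X] [InnerProductSpace ℝ X]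
    [FiniteDimensional ℝ X] [NormedAddCommGroup Y] [InnerProductSpace ℝ Y]
    [FiniteDimensional ℝ Y] (M : X →ₗ[ℝ] Y) (K : Set X)
    (hKclosed : IsClosed K) (hKconv : Convex ℝ K)
    (hKcone : ∀ x ∈ K, ∀ t : ℝ, 0 ≤ t → t • x ∈ K)
    (hker : (LinearMap.ker M : Set X) ∩ K = {0}) :
    IsClosed (M '' K) :=
  stmt0_general M K hKclosed hKcone hker
end

section
/- Let K ⊆ X be a closed convex cone with nonempty interior and M : X → Y a linear map. If Ker(M) ∩ int(K) ≠ ∅, then M(K) = Im(M); in particular M(K) is a closed subspace of Y. -/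
/-!
Pick `e ∈ ker M ∩ int K`. For any `x`, the point `e + s • x` stays in `K` for small `s > 0`,
so by the cone property `x + s⁻¹ • e ∈ K`; this point has the same image `M x` as `x`.
Hence `M '' K` is all of `range M`, a subspace of the finite-dimensional `Y`, hence closed.
-/

open Filter Topology

theorem exists_pos_add_smul_mem_of_mem_interior {E : Type*} [AddCommGroup E] [Module ℝ E]
    [TopologicalSpace E] [ContinuousAdd E] [ContinuousSMul ℝ E] {K : Set E}
    (hK : ∀ x ∈ K, ∀ t : ℝ, 0 ≤ t → t • x ∈ K) {e : E} (he : e ∈ interior K) (x : E) :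
    ∃ t : ℝ, 0 < t ∧ x + t • e ∈ K := by
  have hcont : Continuous fun s : ℝ => e + s • x := by fun_prop
  have hnhds : ∀ᶠ s : ℝ in 𝓝[>] 0, e + s • x ∈ K := by
    refine nhdsWithin_le_nhds (hcont.continuousAt.eventually_mem ?_)
    simpa using mem_interior_iff_mem_nhds.mp he
  obtain ⟨s, hsK, hs⟩ := (hnhds.and self_mem_nhdsWithin).exists
  refine ⟨s⁻¹, inv_pos.mpr hs, ?_⟩
  have hscale : s⁻¹ • (e + s • x) = x + s⁻¹ • e := by
    rw [smul_add, smul_smul, inv_mul_cancel₀ (ne_of_gt hs), one_smul, add_comm]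
  simpa [hscale] using hK _ hsK s⁻¹ (inv_nonneg.mpr (le_of_lt hs))

theorem LinearMap.image_eq_range_of_ker_inter_interior_nonempty {E F : Type*}
    [AddCommGroup E] [Module ℝ E] [TopologicalSpace E] [ContinuousAdd E] [ContinuousSMul ℝ E]
    [AddCommGroup F] [Module ℝ F] (M : E →ₗ[ℝ] F) {K : Set E}
    (hK : ∀ x ∈ K, ∀ t : ℝ, 0 ≤ t → t • x ∈ K)
    (hker : ((LinearMap.ker M : Set E) ∩ interior K).Nonempty) :
    M '' K = (LinearMap.range M : Set F) := by
  obtain ⟨e, he_ker, he_int⟩ := hker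
  refine (Set.image_subset_range M K).antisymm ?_
  rintro _ ⟨x, rfl⟩
  obtain ⟨t, -, hxK⟩ := exists_pos_add_smul_mem_of_mem_interior hK he_int x
  exact ⟨x + t • e, hxK, by simp [LinearMap.mem_ker.mp he_ker]⟩

theorem stmt1_general {X Y : Type*} [NormedAddCommGroup X] [InnerProductSpace ℝ X]
    [NormedAddCommGroup Y] [InnerProductSpace ℝ Y]
    [FiniteDimensional ℝ Y] (M : X →ₗ[ℝ] Y) (K : Set X)
    (hKcone : ∀ x ∈ K, ∀ t : ℝ, 0 ≤ t → t • x ∈ K)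
    (hker : ((LinearMap.ker M : Set X) ∩ interior K).Nonempty) :
    M '' K = (LinearMap.range M : Set Y) ∧ IsClosed (M '' K) := by
  have hrange := M.image_eq_range_of_ker_inter_interior_nonempty hKcone hker
  exact ⟨hrange, hrange ▸ (LinearMap.range M).closed_of_finiteDimensional⟩

theorem stmt1 {X Y : Type*} [NormedAddCommGroup X] [InnerProductSpace ℝ X]
    [FiniteDimensional ℝ X] [NormedAddCommGroup Y] [InnerProductSpace ℝ Y]
    [FiniteDimensional ℝ Y] (M : X →ₗ[ℝ] Y) (K : Set X)
    (hKclosed : IsClosed K) (hKconv : Convex ℝ K)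
    (hKcone : ∀ x ∈ K, ∀ t : ℝ, 0 ≤ t → t • x ∈ K)
    (hint : (interior K).Nonempty)
    (hker : ((LinearMap.ker M : Set X) ∩ interior K).Nonempty) :
    M '' K = (LinearMap.range M : Set Y) ∧ IsClosed (M '' K) :=
  stmt1_general M K hKcone hker
end

section
/- Let M : Z → Y be an injective linear map between finite-dimensional inner product spaces and K ⊆ Z a closed convex cone such that M(K) is closed. Then the dual cone satisfies (M K)* = M (M*M)⁻¹ (K*) + Ker(M*), where M* is the adjoint of M. In particular, if M is a linear isomorphism, then (M K)* = (M*)⁻¹ (K*). -/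
open Pointwise

/-- The dual cone of a set in a real inner product space. -/
def dualCone {X : Type*} [NormedAddCommGroup X] [InnerProductSpace ℝ X]
    (K : Set X) : Set X :=
  {y | ∀ x ∈ K, 0 ≤ (inner ℝ y x : ℝ)}

theorem stmt2 {Z Y : Type*} [NormedAddCommGroup Z] [InnerProductSpace ℝ Z]
    [FiniteDimensional ℝ Z] [NormedAddCommGroup Y] [InnerProductSpace ℝ Y]
    [FiniteDimensional ℝ Y] (M : Z →ₗ[ℝ] Y) (hMinj : Function.Injective M)
    (K : Set Z) (hKclosed : IsClosed K) (hKconv : Convex ℝ K)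
    (hKcone : ∀ x ∈ K, ∀ t : ℝ, 0 ≤ t → t • x ∈ K)
    (hMK : IsClosed (M '' K)) :
    dualCone (M '' K) =
      (M '' ((LinearMap.adjoint M ∘ₗ M) ⁻¹' dualCone K)) +
        (LinearMap.ker (LinearMap.adjoint M) : Set Y) ∧
    (Function.Bijective M →
      dualCone (M '' K) = (LinearMap.adjoint M) ⁻¹' dualCone K) := by
  have key : dualCone (M '' K) = (LinearMap.adjoint M) ⁻¹' dualCone K := by
    ext y
    simp only [dualCone, Set.mem_setOf_eq, Set.mem_preimage, Set.forall_mem_image]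
    constructor
    · intro h x hx
      simpa [LinearMap.adjoint_inner_left] using h hx
    · intro h x hx
      simpa [LinearMap.adjoint_inner_left] using h x hx
  have decomp : ∀ y : Y, ∃ z w, LinearMap.adjoint M w = 0 ∧ y = M z + w := by
    intro y
    have : (LinearMap.range M) ⊔ (LinearMap.range M)ᗮ = ⊤ :=
      Submodule.sup_orthogonal_of_hasOrthogonalProjection
    have hy : y ∈ (LinearMap.range M) ⊔ (LinearMap.range M)ᗮ := this ▸ Submodule.mem_top
    obtain ⟨a, ha, w, hw, rfl⟩ := Submodule.mem_sup.mp hy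
    obtain ⟨z, rfl⟩ := ha
    refine ⟨z, w, ?_, rfl⟩
    have h0 : (inner ℝ (LinearMap.adjoint M w) (LinearMap.adjoint M w) : ℝ) = 0 := by
      rw [LinearMap.adjoint_inner_left]
      exact (Submodule.mem_orthogonal' _ _).mp hw _ ⟨_, rfl⟩
    exact inner_self_eq_zero.mp h0
  refine ⟨?_, fun _ => key⟩
  rw [key]
  ext y
  constructor
  · intro hy
    obtain ⟨z, w, hw, rfl⟩ := decomp y
    refine Set.add_mem_add ⟨z, ?_, rfl⟩ hw
    simp only [Set.mem_preimage, LinearMap.comp_apply]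
    simpa [hw] using hy
  · rintro ⟨a, ⟨z, hz, rfl⟩, w, hw, rfl⟩
    simp only [Set.mem_preimage, map_add]
    have hw' : LinearMap.adjoint M w = 0 := hw
    simpa [hw'] using hz
end
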